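/- The map Ψ of the path-encoding bijection induces: (1) a bijection between simple pyramids rooted at (0,0) and integer sequences satisfying (a) x_{k+1} − x_k ∈ ℤ_{<0} ∪ {1} for all k, and (c) x_0 = 0 and x_{k+1} ≥ (min_{i≤k} x_i) − 1 for all k; (2) a bijection between simple non-negative pyramids rooted at (0,0) and integer sequences satisfying (a) and (d) x_0 = 0 and x_k ≥ 0 for all k. In both cases, an animal with n ∈ ℕ ∪ {∞} vertices corresponds to a sequence of length n, so these bijections restrict to bijections between animals of any prescribed size n and sequences of length n. -/

import Mathlib

/-- A vertex of the lattice: an x-coordinate in ℤ and a height in ℕ. -/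
abbrev Vertex := ℤ × ℕ

/-- Membership in the lattice ZxN = {(x,y) ∈ ℤ×ℕ : x+y even}. -/
def inLattice (v : Vertex) : Prop := Even (v.1 + (v.2 : ℤ))

/-- A directed animal. -/
def IsAnimal (A : Set Vertex) : Prop :=
  A.Nonempty ∧ (∀ v ∈ A, inLattice v) ∧
    ∀ v ∈ A, 0 < v.2 → ((v.1 - 1, v.2 - 1) ∈ A ∨ (v.1 + 1, v.2 - 1) ∈ A)

/-- A pyramid: a directed animal whose only vertex at height 0 is (0,0). -/
def IsPyramid (A : Set Vertex) : Prop :=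
  IsAnimal A ∧ {v ∈ A | v.2 = 0} = {((0 : ℤ), (0 : ℕ))}

/-- A non-negative pyramid: a pyramid all of whose vertices have x-coordinate ≥ 0. -/
def IsNonNegPyramid (A : Set Vertex) : Prop :=
  IsPyramid A ∧ ∀ v ∈ A, 0 ≤ v.1

/-- One step of a chain witnessing the partial order ◁ inside `A`. -/
def chainStep (A : Set Vertex) (u v : Vertex) : Prop :=
  u ∈ A ∧ v ∈ A ∧ u.2 < v.2 ∧ |v.1 - u.1| ≤ 1

/-- The relation a ◁ b. -/
def triLT (A : Set Vertex) (a b : Vertex) : Prop :=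
  Relation.ReflTransGen (chainStep A) a b

/-- The total order a ≼ b on a directed animal. -/
def preOrd (A : Set Vertex) (a b : Vertex) : Prop :=
  triLT A a b ∨ (¬ triLT A a b ∧ ¬ triLT A b a ∧ b.1 < a.1)

/-- `e` enumerates `A` increasingly for ≼, with (possibly infinite) length `len`. -/
def IsEnum (A : Set Vertex) (e : ℕ → Vertex) (len : ℕ∞) : Prop :=
  (∀ k : ℕ, (k : ℕ∞) < len → e k ∈ A) ∧
  (∀ v ∈ A, ∃ k : ℕ, (k : ℕ∞) < len ∧ e k = v) ∧
  (∀ j k : ℕ, (j : ℕ∞) < len → (k : ℕ∞) < len → j < k →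
      preOrd A (e j) (e k) ∧ e j ≠ e k)

/-- A simple animal. -/
def IsSimple (A : Set Vertex) : Prop :=
  IsAnimal A ∧ ∃ (e : ℕ → Vertex) (len : ℕ∞), IsEnum A e len

/-- A (finite or infinite) integer sequence. -/
structure PSeq where
  len : ℕ∞
  x : ℕ → ℤ
  trunc : ∀ k : ℕ, ¬ ((k : ℕ∞) < len) → x k = 0

/-- Condition (a): increments belong to ℤ_{<0} ∪ {1}. -/
def CondA (x : ℕ → ℤ) (len : ℕ∞) : Prop :=
  ∀ k : ℕ, ((k + 1 : ℕ) : ℕ∞) < len → (x (k+1) - x k < 0 ∨ x (k+1) - x k = 1)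

/-- Condition (b): x₀ even, and x_{k+1} even whenever x_{k+1} ≤ (min_{i≤k} x_i) − 2. -/
def CondB (x : ℕ → ℤ) (len : ℕ∞) : Prop :=
  (0 < len → Even (x 0)) ∧
  ∀ k : ℕ, ((k + 1 : ℕ) : ℕ∞) < len →
    x (k+1) ≤ (Finset.range (k+1)).inf' Finset.nonempty_range_add_one x - 2 →
    Even (x (k+1))

/-- Sequences in the image of Ψ: nonempty and satisfying (a) and (b). -/
def GoodSeq (s : PSeq) : Prop := 0 < s.len ∧ CondA s.x s.len ∧ CondB s.x s.len

/-- Condition (c): x₀ = 0 and the path never beats its current minimum by more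
than 1, i.e. x_{k+1} ≥ (min_{i≤k} x_i) − 1 for all k. -/
def CondC (s : PSeq) : Prop :=
  s.x 0 = 0 ∧
  ∀ k : ℕ, ((k + 1 : ℕ) : ℕ∞) < s.len →
    (Finset.range (k+1)).inf' Finset.nonempty_range_add_one s.x - 1 ≤ s.x (k+1)

/-- Condition (d): x₀ = 0 and x_k ≥ 0 for all k. -/
def CondD (s : PSeq) : Prop :=
  s.x 0 = 0 ∧ ∀ k : ℕ, (k : ℕ∞) < s.len → 0 ≤ s.x k

section General

lemma triLT_height {A : Set Vertex} {a b : Vertex} (h : triLT A a b) :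
    a = b ∨ a.2 < b.2 := by
  induction h with
  | refl => exact Or.inl rfl
  | tail hab hbc ih =>
    rcases ih with rfl | hlt
    · exact Or.inr hbc.2.2.1
    · exact Or.inr (lt_trans hlt hbc.2.2.1)

lemma preOrd_antisymm {A : Set Vertex} {a b : Vertex}
    (h1 : preOrd A a b) (h2 : preOrd A b a) : a = b := by
  rcases h1 with h1 | ⟨h1a, h1b, h1c⟩
  · rcases h2 with h2 | ⟨h2a, h2b, h2c⟩
    · rcases triLT_height h1 with rfl | hlt
      · rfl
      · rcases triLT_height h2 with rfl | hlt2
        · rfl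
        · omega
    · exact absurd h1 h2b
  · rcases h2 with h2 | ⟨h2a, h2b, h2c⟩
    · exact absurd h2 h1b
    · omega

/-- From any vertex of an animal one can reach down to a height-0 vertex. -/
lemma exists_ground {A : Set Vertex} (hA : IsAnimal A) :
    ∀ n : ℕ, ∀ v ∈ A, v.2 = n → ∃ c ∈ A, c.2 = 0 ∧ triLT A c v := by
  intro n
  induction n using Nat.strong_induction_on with
  | _ n ih =>
    intro v hv hn
    rcases Nat.eq_zero_or_pos n with rfl | hpos
    · exact ⟨v, hv, hn, Relation.ReflTransGen.refl⟩
    · have := hA.2.2 v hv (by omega)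
      rcases this with hp | hp
      · obtain ⟨c, hc, hc0, hcc⟩ := ih (n-1) (by omega) _ hp (by simp [hn])
        refine ⟨c, hc, hc0, hcc.tail ?_⟩
        exact ⟨hp, hv, by simp; omega, by simp⟩
      · obtain ⟨c, hc, hc0, hcc⟩ := ih (n-1) (by omega) _ hp (by simp [hn])
        refine ⟨c, hc, hc0, hcc.tail ?_⟩
        exact ⟨hp, hv, by simp; omega, by simp⟩

end General
section Enum

variable {A : Set Vertex} {e : ℕ → Vertex} {len : ℕ∞}

lemma enum_index_lt (hE : IsEnum A e len) {a b : ℕ}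
    (ha : (a : ℕ∞) < len) (hb : (b : ℕ∞) < len)
    (h : triLT A (e a) (e b)) (hne : e a ≠ e b) : a < b := by
  rcases lt_trichotomy a b with h' | rfl | h'
  · exact h'
  · exact absurd rfl hne
  · have h2 := hE.2.2 b a hb ha h'
    exact absurd (preOrd_antisymm h2.1 (Or.inl h)) (fun heq => hne heq.symm)

lemma enum_zero_lt (hE : IsEnum A e len) (hA : IsAnimal A) : (0 : ℕ∞) < len := by
  obtain ⟨v, hv⟩ := hA.1
  obtain ⟨k, hk, -⟩ := hE.2.1 v hv
  exact lt_of_le_of_lt (by simp) hk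

/-- The first vertex of the enumeration has height 0. -/
lemma enum_zero_height (hE : IsEnum A e len) (hA : IsAnimal A) : (e 0).2 = 0 := by
  have h0 : (0 : ℕ∞) < len := enum_zero_lt hE hA
  obtain ⟨c, hc, hc0, hcc⟩ := exists_ground hA (e 0).2 (e 0) (hE.1 0 h0) rfl
  obtain ⟨m, hm, rfl⟩ := hE.2.1 c hc
  rcases Nat.eq_zero_or_pos m with rfl | hpos
  · exact hc0
  · have := hE.2.2 0 m h0 hm hpos
    have heq := preOrd_antisymm this.1 (Or.inl hcc)
    exact absurd heq this.2

/-- A parent of an enumerated vertex appears strictly before it. -/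
lemma enum_between (hE : IsEnum A e len) {j k : ℕ} {v : Vertex}
    (hj : (j : ℕ∞) < len) (hk : (k : ℕ∞) < len) (hjk : j < k)
    (hv : v ∈ A) (h1 : preOrd A (e j) v) (h1' : v ≠ e j)
    (h2 : preOrd A v (e k)) (h2' : v ≠ e k) :
    ∃ m : ℕ, (m : ℕ∞) < len ∧ j < m ∧ m < k ∧ e m = v := by
  obtain ⟨m, hm, rfl⟩ := hE.2.1 v hv
  refine ⟨m, hm, ?_, ?_, rfl⟩
  · rcases lt_trichotomy j m with h | rfl | h
    · exact h
    · exact absurd rfl (Ne.symm h1')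
    · exact absurd (preOrd_antisymm (hE.2.2 m j hm hj h).1 h1) (hE.2.2 m j hm hj h).2
  · rcases lt_trichotomy m k with h | rfl | h
    · exact h
    · exact absurd rfl h2'
    · exact absurd (preOrd_antisymm (hE.2.2 k m hk hm h).1 h2) (hE.2.2 k m hk hm h).2

end Enum
section Forward

variable {A : Set Vertex} {e : ℕ → Vertex} {len : ℕ∞}

lemma lattice_parity {A : Set Vertex} (hA : IsAnimal A) {u v : Vertex}
    (hu : u ∈ A) (hv : v ∈ A) (h2 : u.2 = v.2)
    (h1 : v.1 = u.1 + 1 ∨ v.1 = u.1 - 1) : False := by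
  have e1 := hA.2.1 u hu
  have e2 := hA.2.1 v hv
  rw [inLattice, Int.even_iff] at e1 e2
  omega

/-- Forward γ: indices increase along closeness. -/
lemma enum_gamma (hE : IsEnum A e len) (hA : IsAnimal A) {j k : ℕ}
    (hj : (j : ℕ∞) < len) (hk : (k : ℕ∞) < len) (hjk : j < k)
    (hx : |(e k).1 - (e j).1| ≤ 1) : (e j).2 < (e k).2 := by
  rcases lt_trichotomy ((e j).2) ((e k).2) with h | h | h
  · exact h
  · -- same height
    rcases eq_or_ne ((e j).1) ((e k).1) with hxx | hxx
    · exact absurd (Prod.ext hxx h) (hE.2.2 j k hj hk hjk).2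
    · exact absurd (lattice_parity hA (hE.1 j hj) (hE.1 k hk) h
        (by rcases abs_le.mp hx with ⟨h1, h2⟩; omega)) not_false
  · -- e k below e j : chainStep (e k) (e j)
    have hstep : chainStep A (e k) (e j) :=
      ⟨hE.1 k hk, hE.1 j hj, h, by rw [abs_sub_comm] at hx; exact hx⟩
    have hne : e k ≠ e j := fun hq => (hE.2.2 j k hj hk hjk).2 hq.symm
    have := enum_index_lt hE hk hj (Relation.ReflTransGen.single hstep) hne
    omega

lemma parent_exists {A : Set Vertex} (hA : IsAnimal A) {v : Vertex}
    (hv : v ∈ A) (hpos : 0 < v.2) :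
    ∃ p ∈ A, (p.1 = v.1 - 1 ∨ p.1 = v.1 + 1) ∧ p.2 = v.2 - 1 := by
  rcases hA.2.2 v hv hpos with hp | hp
  · exact ⟨_, hp, Or.inl rfl, rfl⟩
  · exact ⟨_, hp, Or.inr rfl, rfl⟩

lemma chainStep_parent {A : Set Vertex} {p v : Vertex} (hp : p ∈ A) (hv : v ∈ A)
    (hpos : 0 < v.2) (h1 : p.1 = v.1 - 1 ∨ p.1 = v.1 + 1) (h2 : p.2 = v.2 - 1) :
    chainStep A p v :=
  ⟨hp, hv, by omega, by rcases h1 with h | h <;> simp [h] <;> omega⟩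

lemma parent_index (hE : IsEnum A e len) (hA : IsAnimal A) {k : ℕ}
    (hk : (k : ℕ∞) < len) (hpos : 0 < (e k).2) :
    ∃ m : ℕ, (m : ℕ∞) < len ∧ m < k ∧
      ((e m).1 = (e k).1 - 1 ∨ (e m).1 = (e k).1 + 1) ∧ (e m).2 = (e k).2 - 1 := by
  obtain ⟨p, hp, hp1, hp2⟩ := parent_exists hA (hE.1 k hk) hpos
  obtain ⟨m, hm, rfl⟩ := hE.2.1 p hp
  have hstep := chainStep_parent hp (hE.1 k hk) hpos hp1 hp2
  have hne : e m ≠ e k := fun hq => by rw [hq] at hp2; omega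
  exact ⟨m, hm, enum_index_lt hE hm hk (Relation.ReflTransGen.single hstep) hne,
    hp1, hp2⟩

lemma nat_cast_lt_trans {j k : ℕ} {len : ℕ∞} (h : j ≤ k) (hk : (k : ℕ∞) < len) :
    (j : ℕ∞) < len := lt_of_le_of_lt (by exact_mod_cast h) hk

/-- Forward (a): consecutive steps are in ℤ_{<0} ∪ {1}. -/
lemma enum_condA (hE : IsEnum A e len) (hA : IsAnimal A) {k : ℕ}
    (hk1 : ((k + 1 : ℕ) : ℕ∞) < len) :
    (e (k+1)).1 - (e k).1 < 0 ∨ (e (k+1)).1 - (e k).1 = 1 := by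
  have hk : (k : ℕ∞) < len := nat_cast_lt_trans (by omega) hk1
  have hcons := hE.2.2 k (k+1) hk hk1 (by omega)
  have hnob : ∀ v ∈ A, preOrd A (e k) v → v ≠ e k → preOrd A v (e (k+1)) →
      v ≠ e (k+1) → False := by
    intro v hv h1 h1' h2 h2'
    obtain ⟨m, _, hm1, hm2, -⟩ := enum_between hE hk hk1 (by omega) hv h1 h1' h2 h2'
    omega
  rcases hcons.1 with htri | ⟨-, -, hlt⟩
  · rcases Relation.ReflTransGen.cases_head htri with heq | ⟨c, hstep, hrest⟩
    · exact absurd heq hcons.2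
    · by_cases hc : c = e (k+1)
      · subst hc
        -- direct chainStep
        rcases eq_or_ne ((e (k+1)).1) ((e k).1) with hxx | hxx
        on_goal 2 =>
          have habs := abs_le.mp hstep.2.2.2
          omega
        · -- same x: height gap ≥ 2, parent strictly between
          exfalso
          have hy : (e k).2 < (e (k+1)).2 := hstep.2.2.1
          have hpar : (e k).2 + 2 ≤ (e (k+1)).2 := by
            have e1 := hA.2.1 _ (hE.1 k hk)
            have e2 := hA.2.1 _ (hE.1 (k+1) hk1)
            rw [inLattice, Int.even_iff] at e1 e2
            omega
          obtain ⟨p, hp, hp1, hp2⟩ := parent_exists hA (hE.1 (k+1) hk1) (by omega)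
          have hs1 : chainStep A (e k) p :=
            ⟨hE.1 k hk, hp, by omega, by rcases hp1 with h | h <;> rw [h, hxx] <;> simp⟩
          have hs2 : chainStep A p (e (k+1)) :=
            chainStep_parent hp (hE.1 (k+1) hk1) (by omega) hp1 hp2
          exact hnob p hp (Or.inl (Relation.ReflTransGen.single hs1))
            (fun hq => by rw [hq] at hp2; omega)
            (Or.inl (Relation.ReflTransGen.single hs2))
            (fun hq => by rw [hq] at hp2; omega)
      · exfalso
        have hstepne : e k ≠ c := fun hq => by
          have := hstep.2.2.1; rw [hq] at this; omega
        exact hnob c hstep.2.1 (Or.inl (Relation.ReflTransGen.single hstep))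
          (Ne.symm hstepne) (Or.inl hrest) hc
  · left; omega

end Forward
section ForwardB

variable {A : Set Vertex} {e : ℕ → Vertex} {len : ℕ∞}

lemma enum_zero_even (hE : IsEnum A e len) (hA : IsAnimal A) : Even ((e 0).1) := by
  have h0 : (0 : ℕ∞) < len := enum_zero_lt hE hA
  have := hA.2.1 _ (hE.1 0 h0)
  rw [inLattice, enum_zero_height hE hA] at this
  simpa using this

/-- If an enumerated vertex goes at least two below the running minimum of
x-coordinates, it has height 0. -/
lemma enum_drop_ground (hE : IsEnum A e len) (hA : IsAnimal A) {k : ℕ}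
    (hk1 : ((k + 1 : ℕ) : ℕ∞) < len)
    (hdrop : (e (k+1)).1 ≤
      (Finset.range (k+1)).inf' Finset.nonempty_range_add_one (fun i => (e i).1) - 2) :
    (e (k+1)).2 = 0 := by
  by_contra hpos
  obtain ⟨m, hm, hmk, hm1, -⟩ := parent_index hE hA hk1 (by omega)
  have hinf : (Finset.range (k+1)).inf' Finset.nonempty_range_add_one
      (fun i => (e i).1) ≤ (e m).1 :=
    Finset.inf'_le _ (Finset.mem_range.mpr (by omega))
  omega

lemma enum_condB2 (hE : IsEnum A e len) (hA : IsAnimal A) {k : ℕ}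
    (hk1 : ((k + 1 : ℕ) : ℕ∞) < len)
    (hdrop : (e (k+1)).1 ≤
      (Finset.range (k+1)).inf' Finset.nonempty_range_add_one (fun i => (e i).1) - 2) :
    Even ((e (k+1)).1) := by
  have h0 := enum_drop_ground hE hA hk1 hdrop
  have := hA.2.1 _ (hE.1 (k+1) hk1)
  rw [inLattice, h0] at this
  simpa using this

lemma pyr_e0 (hE : IsEnum A e len) (hpyr : IsPyramid A) :
    e 0 = ((0 : ℤ), (0 : ℕ)) := by
  have h0 : (0 : ℕ∞) < len := enum_zero_lt hE hpyr.1
  have : e 0 ∈ {v ∈ A | v.2 = 0} := ⟨hE.1 0 h0, enum_zero_height hE hpyr.1⟩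
  rw [hpyr.2] at this
  exact this

/-- In a pyramid, the path never goes more than 1 below the running minimum. -/
lemma pyr_condC2 (hE : IsEnum A e len) (hpyr : IsPyramid A) {k : ℕ}
    (hk1 : ((k + 1 : ℕ) : ℕ∞) < len) :
    (Finset.range (k+1)).inf' Finset.nonempty_range_add_one (fun i => (e i).1) - 1 ≤
      (e (k+1)).1 := by
  by_contra hdrop
  push_neg at hdrop
  have hg : (e (k+1)).2 = 0 := enum_drop_ground hE hpyr.1 hk1 (by omega)
  have : e (k+1) ∈ {v ∈ A | v.2 = 0} := ⟨hE.1 (k+1) hk1, hg⟩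
  rw [hpyr.2] at this
  have h00 : e (k+1) = e 0 := by rw [this, pyr_e0 hE hpyr]
  have h0 : (0 : ℕ∞) < len := enum_zero_lt hE hpyr.1
  exact (hE.2.2 0 (k+1) h0 hk1 (by omega)).2 h00.symm

/-- Converse: condition (c) on the enumeration forces a pyramid. -/
lemma pyr_of_condC (hE : IsEnum A e len) (hA : IsAnimal A)
    (h0 : (e 0).1 = 0)
    (hc : ∀ k : ℕ, ((k + 1 : ℕ) : ℕ∞) < len →
      (Finset.range (k+1)).inf' Finset.nonempty_range_add_one (fun i => (e i).1) - 1 ≤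
        (e (k+1)).1) :
    IsPyramid A := by
  have hlen0 : (0 : ℕ∞) < len := enum_zero_lt hE hA
  have he0 : e 0 = ((0 : ℤ), (0 : ℕ)) :=
    Prod.ext h0 (enum_zero_height hE hA)
  refine ⟨hA, ?_⟩
  ext v
  simp only [Set.mem_setOf_eq, Set.mem_singleton_iff]
  constructor
  · rintro ⟨hv, hv0⟩
    obtain ⟨m, hm, rfl⟩ := hE.2.1 v hv
    rcases Nat.eq_zero_or_pos m with rfl | hpos
    · rw [he0]
    · exfalso
      obtain ⟨m', rfl⟩ : ∃ m', m = m' + 1 := ⟨m - 1, by omega⟩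
      -- every earlier vertex has x-coordinate ≥ (e m).1 + 2
      have hbig : ∀ i, i < m' + 1 → (e (m'+1)).1 + 2 ≤ (e i).1 := by
        intro i hi
        have hiL : (i : ℕ∞) < len := nat_cast_lt_trans (by omega) hm
        have hP := hE.2.2 i (m'+1) hiL hm hi
        have hnt : ¬ triLT A (e i) (e (m'+1)) := by
          intro ht
          rcases triLT_height ht with heq | hlt
          · exact hP.2 heq
          · omega
        rcases hP.1 with ht | ⟨-, hnt2, hxlt⟩
        · exact absurd ht hnt
        · -- (e i).1 > (e (m'+1)).1 ; exclude (e i).1 = (e (m'+1)).1 + 1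
          rcases eq_or_ne ((e i).1) ((e (m'+1)).1 + 1) with hq | hq
          · exfalso
            have hipos : 0 < (e i).2 := by
              have e1 := hA.2.1 _ (hE.1 i hiL)
              have e2 := hA.2.1 _ (hE.1 (m'+1) hm)
              rw [inLattice, Int.even_iff] at e1 e2
              rw [hv0] at e2
              omega
            exact hnt2 (Relation.ReflTransGen.single
              ⟨hE.1 (m'+1) hm, hE.1 i hiL, by omega, by rw [hq]; simp⟩)
          · omega
      have hinf : (e (m'+1)).1 + 2 ≤
          (Finset.range (m'+1)).inf' Finset.nonempty_range_add_one (fun i => (e i).1) :=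
        Finset.le_inf' _ _ (fun i hi => hbig i (by
          have := Finset.mem_range.mp hi; omega))
      have := hc m' hm
      omega
  · rintro rfl
    exact ⟨he0 ▸ hE.1 0 hlen0, rfl⟩

end ForwardB
section Yseq

/-- auxiliary adjacency predicate -/
def padj (x : ℕ → ℤ) (j k : ℕ) : Prop := x j = x k - 1 ∨ x j = x k + 1

instance : ∀ x j k, Decidable (padj x j k) := fun x j k => by
  unfold padj; infer_instance

/-- List of the first `n` heights. -/
def yvec (x : ℕ → ℤ) : ℕ → List ℕ
  | 0 => []
  | n + 1 =>
    yvec x n ++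
      [((List.range n).map
          (fun j => if padj x j n then (yvec x n).getD j 0 + 1 else 0)).foldr max 0]

lemma yvec_length (x : ℕ → ℤ) (n : ℕ) : (yvec x n).length = n := by
  induction n with
  | zero => rfl
  | succ n ih => simp [yvec, ih]

lemma yvec_getD_succ (x : ℕ → ℤ) {k n : ℕ} (h : k < n) :
    (yvec x (n+1)).getD k 0 = (yvec x n).getD k 0 := by
  rw [yvec, List.getD_append]
  rw [yvec_length]; exact h

lemma yvec_getD_stable (x : ℕ → ℤ) {k n m : ℕ} (h : k < n) (h2 : n ≤ m) :
    (yvec x m).getD k 0 = (yvec x n).getD k 0 := by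
  induction m with
  | zero => omega
  | succ m ih =>
    rcases eq_or_lt_of_le h2 with rfl | hlt
    · rfl
    · rw [yvec_getD_succ x (by omega), ih (by omega)]

/-- The height sequence. -/
def yseq (x : ℕ → ℤ) (k : ℕ) : ℕ := (yvec x (k+1)).getD k 0

lemma yseq_eq_getD (x : ℕ → ℤ) {k n : ℕ} (h : k < n) :
    yseq x k = (yvec x n).getD k 0 := (yvec_getD_stable x (by omega) h).symm

lemma yseq_unfold (x : ℕ → ℤ) (k : ℕ) :
    yseq x k =
      ((List.range k).map
        (fun j => if padj x j k then yseq x j + 1 else 0)).foldr max 0 := by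
  rw [yseq, yvec]
  rw [List.getD_append_right _ _ _ _ (le_of_eq (yvec_length x k))]
  rw [yvec_length, Nat.sub_self, List.getD_cons_zero]
  congr 1
  apply List.map_congr_left
  intro j hj
  have hjk : j < k := List.mem_range.mp hj
  rw [yseq_eq_getD x hjk]

lemma yseq_zero (x : ℕ → ℤ) : yseq x 0 = 0 := by rw [yseq_unfold]; simp

lemma le_foldr_max {l : List ℕ} {a : ℕ} (h : a ∈ l) : a ≤ l.foldr max 0 := by
  induction l with
  | nil => cases h
  | cons b t ih =>
    rcases List.mem_cons.mp h with rfl | h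
    · exact le_max_left _ _
    · exact le_trans (ih h) (le_max_right _ _)

lemma foldr_max_cases (l : List ℕ) : l.foldr max 0 = 0 ∨ l.foldr max 0 ∈ l := by
  induction l with
  | nil => exact Or.inl rfl
  | cons b t ih =>
    simp only [List.foldr_cons]
    rcases le_total b (t.foldr max 0) with h | h
    · rw [max_eq_right h]
      rcases ih with h0 | hm
      · exact Or.inl h0
      · exact Or.inr (List.mem_cons_of_mem _ hm)
    · rw [max_eq_left h]
      exact Or.inr List.mem_cons_self

lemma yseq_le (x : ℕ → ℤ) {j k : ℕ} (hjk : j < k) (hadj : padj x j k) :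
    yseq x j + 1 ≤ yseq x k := by
  rw [yseq_unfold x k]
  apply le_foldr_max
  rw [List.mem_map]
  exact ⟨j, List.mem_range.mpr hjk, by rw [if_pos hadj]⟩

lemma yseq_cases (x : ℕ → ℤ) (k : ℕ) :
    yseq x k = 0 ∨ ∃ j, j < k ∧ padj x j k ∧ yseq x k = yseq x j + 1 := by
  rcases foldr_max_cases ((List.range k).map
      (fun j => if padj x j k then yseq x j + 1 else 0)) with h0 | hm
  · exact Or.inl (by rw [yseq_unfold]; exact h0)
  · rw [List.mem_map] at hm
    obtain ⟨j, hj, hval⟩ := hm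
    by_cases hadj : padj x j k
    · rw [if_pos hadj] at hval
      exact Or.inr ⟨j, List.mem_range.mp hj, hadj, by rw [yseq_unfold]; exact hval.symm⟩
    · rw [if_neg hadj] at hval
      exact Or.inl (by rw [yseq_unfold]; exact hval.symm)

lemma yseq_pos_of_adj (x : ℕ → ℤ) {j k : ℕ} (hjk : j < k) (hadj : padj x j k) :
    0 < yseq x k := lt_of_lt_of_le (by omega) (yseq_le x hjk hadj)

end Yseq
section Backward

/-- Canonical enumeration built from a sequence. -/
def esq (x : ℕ → ℤ) (k : ℕ) : Vertex := (x k, yseq x k)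

/-- The animal reconstructed from a sequence. -/
def ASet (x : ℕ → ℤ) (len : ℕ∞) : Set Vertex :=
  {v | ∃ k : ℕ, (k : ℕ∞) < len ∧ esq x k = v}

lemma mem_ASet {x : ℕ → ℤ} {len : ℕ∞} {k : ℕ} (hk : (k : ℕ∞) < len) :
    esq x k ∈ ASet x len := ⟨k, hk, rfl⟩

/-- Intermediate value property for sequences satisfying (a). -/
lemma ivl {x : ℕ → ℤ} {len : ℕ∞} (hA : CondA x len) {j m : ℕ}
    (hjm : j ≤ m) {v : ℤ} (h1 : x j ≤ v) :
    ∀ (_ : (m : ℕ∞) < len) (_ : v ≤ x m), ∃ i, j ≤ i ∧ i ≤ m ∧ x i = v := by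
  induction m, hjm using Nat.le_induction with
  | base => exact fun _ h2 => ⟨j, le_rfl, le_rfl, le_antisymm h1 h2⟩
  | succ m hjm ih =>
    intro hm h2
    have hm' : (m : ℕ∞) < len := nat_cast_lt_trans (by omega) hm
    by_cases hvm : v ≤ x m
    · obtain ⟨i, hi1, hi2, hi3⟩ := ih hm' hvm
      exact ⟨i, hi1, by omega, hi3⟩
    · rcases hA m hm with hneg | hpos
      · omega
      · exact ⟨m + 1, by omega, le_rfl, by omega⟩

lemma crossing {x : ℕ → ℤ} {len : ℕ∞} (hA : CondA x len) {j k : ℕ}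
    (hk : (k : ℕ∞) < len) (hjk : j < k) (h : x j ≤ x k - 1) :
    ∃ i, j ≤ i ∧ i < k ∧ x i = x k - 1 := by
  obtain ⟨m, rfl⟩ : ∃ m, k = m + 1 := ⟨k - 1, by omega⟩
  rcases hA m hk with hneg | hpos
  · have hm' : (m : ℕ∞) < len := nat_cast_lt_trans (by omega) hk
    obtain ⟨i, hi1, hi2, hi3⟩ := ivl hA (show j ≤ m by omega) h hm' (by omega)
    exact ⟨i, hi1, by omega, hi3⟩
  · exact ⟨m, by omega, by omega, by omega⟩

/-- Backward γ: heights strictly increase along closeness. -/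
lemma bgamma {x : ℕ → ℤ} {len : ℕ∞} (hA : CondA x len) :
    ∀ k : ℕ, (k : ℕ∞) < len → ∀ j : ℕ, j < k → |x k - x j| ≤ 1 → yseq x j < yseq x k := by
  intro k
  induction k using Nat.strong_induction_on with
  | _ k IH =>
    intro hk j hjk habs
    by_cases hadj : padj x j k
    · exact lt_of_lt_of_le (by omega) (yseq_le x hjk hadj)
    · have habs' := abs_le.mp habs
      have hxx : x j = x k := by unfold padj at hadj; push_neg at hadj; omega
      obtain ⟨k', rfl⟩ : ∃ k', k = k' + 1 := ⟨k - 1, by omega⟩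
      have hjlen : ((j + 1 : ℕ) : ℕ∞) < len := nat_cast_lt_trans (by omega) hk
      rcases hA j hjlen with hneg | hpos
      · have hjk' : j < k' := by
          rcases eq_or_lt_of_le (Nat.lt_succ_iff.mp hjk) with rfl | h
          · omega
          · exact h
        obtain ⟨i, hi1, hi2, hi3⟩ :=
          crossing hA hk (show j + 1 < k' + 1 by omega) (by omega)
        have hyi : yseq x j < yseq x i :=
          IH i (by omega) (nat_cast_lt_trans (by omega) hk) j (by omega) (by
            rw [hi3]; rw [hxx]; simp)
        exact lt_trans hyi (lt_of_lt_of_le (by omega)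
          (yseq_le x (by omega) (Or.inl hi3)))
      · have hjk' : j < k' := by
          rcases eq_or_lt_of_le (Nat.lt_succ_iff.mp hjk) with rfl | h
          · omega
          · exact h
        have hadj' : padj x (j+1) (k'+1) := Or.inr (by omega)
        have hyi : yseq x j < yseq x (j+1) :=
          IH (j+1) (by omega) hjlen j (by omega) (by
            have : x (j+1) - x j = 1 := hpos; rw [this]; simp)
        exact lt_trans hyi (lt_of_lt_of_le (by omega)
          (yseq_le x (by omega) hadj'))

/-- Backward α: rightward-or-slightly-left vertices are reachable. -/
lemma btri {x : ℕ → ℤ} {len : ℕ∞} (hA : CondA x len) :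
    ∀ k : ℕ, (k : ℕ∞) < len → ∀ j : ℕ, j < k → x j - 1 ≤ x k →
      triLT (ASet x len) (esq x j) (esq x k) := by
  intro k
  induction k using Nat.strong_induction_on with
  | _ k IH =>
    intro hk j hjk hxjk
    have hj : (j : ℕ∞) < len := nat_cast_lt_trans (by omega) hk
    by_cases hle : x k ≤ x j + 1
    · exact Relation.ReflTransGen.single
        ⟨mem_ASet hj, mem_ASet hk,
          bgamma hA k hk j hjk (by rw [abs_le]; omega),
          by simp only [esq]; rw [abs_le]; omega⟩
    · obtain ⟨i, hi1, hi2, hi3⟩ := crossing hA hk hjk (by omega)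
      have hji : j < i := by rcases eq_or_lt_of_le hi1 with rfl | h; omega; exact h
      have h1 := IH i hi2 (nat_cast_lt_trans (by omega) hk) j hji (by omega)
      exact h1.tail ⟨mem_ASet (nat_cast_lt_trans (by omega) hk), mem_ASet hk,
        bgamma hA k hk i hi2 (by rw [abs_le]; omega),
        by simp only [esq]; rw [abs_le]; omega⟩

lemma b_inj {x : ℕ → ℤ} {len : ℕ∞} (hA : CondA x len) {j k : ℕ}
    (hk : (k : ℕ∞) < len) (hjk : j < k) : esq x j ≠ esq x k := by
  intro h
  have hx : x j = x k := congrArg Prod.fst h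
  have hy : yseq x j = yseq x k := congrArg Prod.snd h
  have := bgamma hA k hk j hjk (by rw [hx]; simp)
  omega

lemma b_step_index {x : ℕ → ℤ} {len : ℕ∞} (hA : CondA x len) {u v : Vertex}
    (h : chainStep (ASet x len) u v) {a : ℕ} (ha : (a : ℕ∞) < len)
    (hu : u = esq x a) : ∃ c : ℕ, (c : ℕ∞) < len ∧ v = esq x c ∧ a < c := by
  obtain ⟨c, hc, hvc⟩ := h.2.1
  refine ⟨c, hc, hvc.symm, ?_⟩
  rcases lt_trichotomy a c with h' | rfl | h'
  · exact h'
  · exfalso; have := h.2.2.1; rw [hu, ← hvc] at this; exact lt_irrefl _ this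
  · exfalso
    have hd := h.2.2.2
    rw [hu, ← hvc] at hd
    have := bgamma hA a ha c h' (by rw [abs_sub_comm]; simpa [esq] using hd)
    have h2 := h.2.2.1
    rw [hu, ← hvc] at h2
    simp only [esq] at h2
    omega

lemma b_triLT_index {x : ℕ → ℤ} {len : ℕ∞} (hA : CondA x len) {u v : Vertex}
    (h : triLT (ASet x len) u v) {a : ℕ} (ha : (a : ℕ∞) < len)
    (hu : u = esq x a) : ∃ c : ℕ, (c : ℕ∞) < len ∧ v = esq x c ∧ a ≤ c := by
  induction h with
  | refl => exact ⟨a, ha, hu, le_rfl⟩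
  | tail hbc hstep ih =>
    obtain ⟨c, hc, hvc, hac⟩ := ih
    obtain ⟨d, hd, hwd, hcd⟩ := b_step_index hA hstep hc hvc
    exact ⟨d, hd, hwd, by omega⟩

lemma b_not_triLT {x : ℕ → ℤ} {len : ℕ∞} (hA : CondA x len) {a b : ℕ}
    (ha : (a : ℕ∞) < len) (hb : (b : ℕ∞) < len) (hab : a < b) :
    ¬ triLT (ASet x len) (esq x b) (esq x a) := by
  intro h
  obtain ⟨c, hc, hac, hbc⟩ := b_triLT_index hA h hb rfl
  rcases lt_trichotomy a c with h' | rfl | h'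
  · exact b_inj hA hc h' hac
  · omega
  · exact b_inj hA ha h' hac.symm

end Backward
section BackwardAnimal

lemma b_no_adj {x : ℕ → ℤ} {len : ℕ∞} (hA : CondA x len) {k : ℕ}
    (hk : ((k + 1 : ℕ) : ℕ∞) < len) (hno : ∀ j, j < k + 1 → ¬ padj x j (k+1)) :
    ∀ j, j < k + 1 → x (k+1) + 2 ≤ x j := by
  intro j hj
  by_contra hcon
  push_neg at hcon
  rcases lt_trichotomy (x j) (x (k+1)) with hlt | heq | hgt
  · obtain ⟨i, hi1, hi2, hi3⟩ := crossing hA hk hj (by omega)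
    exact hno i hi2 (Or.inl hi3)
  · have hjk : j < k := by
      rcases eq_or_lt_of_le (Nat.lt_succ_iff.mp hj) with rfl | h
      · rcases hA j hk with h' | h' <;> omega
      · exact h
    have hjlen : ((j + 1 : ℕ) : ℕ∞) < len := nat_cast_lt_trans (by omega) hk
    rcases hA j hjlen with hneg | hpos
    · obtain ⟨i, hi1, hi2, hi3⟩ :=
        crossing hA hk (show j + 1 < k + 1 by omega) (by omega)
      exact hno i hi2 (Or.inl hi3)
    · exact hno (j+1) (by omega) (Or.inr (by omega))
  · have : x j = x (k+1) + 1 := by omega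
    exact hno j hj (Or.inr this)

lemma b_lattice {x : ℕ → ℤ} {len : ℕ∞} (hA : CondA x len) (hB : CondB x len) :
    ∀ k : ℕ, (k : ℕ∞) < len → Even (x k + (yseq x k : ℤ)) := by
  intro k
  induction k using Nat.strong_induction_on with
  | _ k IH =>
    intro hk
    rcases Nat.eq_zero_or_pos k with rfl | hpos
    · rw [yseq_zero]
      simpa using hB.1 (by exact_mod_cast hk)
    · obtain ⟨k', rfl⟩ : ∃ k'', k = k'' + 1 := ⟨k - 1, by omega⟩
      rcases yseq_cases x (k'+1) with h0 | ⟨j, hj, hadj, heq⟩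
      · have hno : ∀ j, j < k' + 1 → ¬ padj x j (k'+1) := by
          intro j hj hadj
          have := yseq_pos_of_adj x hj hadj
          omega
        have hbig := b_no_adj hA hk hno
        have hinf : x (k'+1) ≤
            (Finset.range (k'+1)).inf' Finset.nonempty_range_add_one x - 2 := by
          have : x (k'+1) + 2 ≤
              (Finset.range (k'+1)).inf' Finset.nonempty_range_add_one x :=
            Finset.le_inf' _ _ (fun i hi => hbig i (by
              have := Finset.mem_range.mp hi; omega))
          omega
        have := hB.2 k' hk hinf
        rw [h0]
        simpa using this
      · have hIH := IH j hj (nat_cast_lt_trans (by omega) hk)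
        rw [Int.even_iff] at hIH ⊢
        rcases hadj with h | h <;> (rw [heq]; push_cast; omega)

lemma b_animal {x : ℕ → ℤ} {len : ℕ∞} (hA : CondA x len) (hB : CondB x len)
    (hlen : 0 < len) : IsAnimal (ASet x len) := by
  refine ⟨⟨esq x 0, mem_ASet (by exact_mod_cast hlen)⟩, ?_, ?_⟩
  · rintro v ⟨k, hk, rfl⟩
    exact b_lattice hA hB k hk
  · rintro v ⟨k, hk, rfl⟩ hpos
    rcases Nat.eq_zero_or_pos k with rfl | hkpos
    · simp [esq, yseq_zero] at hpos
    · obtain ⟨k', rfl⟩ : ∃ k'', k = k'' + 1 := ⟨k - 1, by omega⟩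
      rcases yseq_cases x (k'+1) with h0 | ⟨j, hj, hadj, heq⟩
      · simp only [esq] at hpos; omega
      · have hjlen : (j : ℕ∞) < len := nat_cast_lt_trans (by omega) hk
        rcases hadj with h | h
        · left
          have : ((esq x (k'+1)).1 - 1, (esq x (k'+1)).2 - 1) = esq x j := by
            simp only [esq]
            exact Prod.ext (by omega) (by omega)
          rw [this]
          exact mem_ASet hjlen
        · right
          have : ((esq x (k'+1)).1 + 1, (esq x (k'+1)).2 - 1) = esq x j := by
            simp only [esq]
            exact Prod.ext (by omega) (by omega)
          rw [this]
          exact mem_ASet hjlen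

lemma b_enum {x : ℕ → ℤ} {len : ℕ∞} (hA : CondA x len) :
    IsEnum (ASet x len) (esq x) len := by
  refine ⟨fun k hk => mem_ASet hk, fun v hv => hv, ?_⟩
  intro j k hj hk hjk
  refine ⟨?_, fun h => b_inj hA hk hjk h⟩
  by_cases ht : triLT (ASet x len) (esq x j) (esq x k)
  · exact Or.inl ht
  · refine Or.inr ⟨ht, b_not_triLT hA hj hk hjk, ?_⟩
    by_contra hcon
    push_neg at hcon
    simp only [esq] at hcon
    exact ht (btri hA k hk j hjk (by omega))

end BackwardAnimal
section Unique

variable {A : Set Vertex} {e e' : ℕ → Vertex} {len len' : ℕ∞}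

lemma enum_ne_of_lt (hE : IsEnum A e len) {i j : ℕ} (hi : (i : ℕ∞) < len)
    (hj : (j : ℕ∞) < len) (hij : i ≠ j) : e i ≠ e j := by
  rcases lt_or_gt_of_ne hij with h | h
  · exact (hE.2.2 i j hi hj h).2
  · exact fun hq => (hE.2.2 j i hj hi h).2 hq.symm

lemma enum_unique_ptwise (hE : IsEnum A e len) (hE' : IsEnum A e' len') :
    ∀ k : ℕ, (k : ℕ∞) < len → (k : ℕ∞) < len' → e k = e' k := by
  intro k
  induction k using Nat.strong_induction_on with
  | _ k IH =>
    intro hk hk'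
    obtain ⟨m, hm, hme⟩ := hE'.2.1 (e k) (hE.1 k hk)
    rcases lt_trichotomy m k with h | rfl | h
    · exfalso
      have hml : (m : ℕ∞) < len := nat_cast_lt_trans (by omega) hk
      have := IH m h hml hm
      rw [← this] at hme
      exact enum_ne_of_lt hE hml hk (by omega) hme
    · exact hme.symm
    · obtain ⟨n, hn, hne⟩ := hE.2.1 (e' k) (hE'.1 k hk')
      rcases lt_trichotomy n k with h2 | rfl | h2
      · exfalso
        have hnl : (n : ℕ∞) < len' := nat_cast_lt_trans (by omega) hk'
        have := IH n h2 hn hnl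
        rw [this] at hne
        exact enum_ne_of_lt hE' hnl hk' (by omega) hne
      · exact hne
      · have p1 := (hE'.2.2 k m hk' hm h).1
        rw [hme] at p1
        have p2 := (hE.2.2 k n hk hn h2).1
        rw [hne] at p2
        exact preOrd_antisymm p2 p1

lemma enum_len_le (hE : IsEnum A e len) (hE' : IsEnum A e' len') : len ≤ len' := by
  by_contra hcon
  push_neg at hcon
  obtain ⟨k, hk⟩ : ∃ n : ℕ, len' = n := by
    lift len' to ℕ using hcon.ne_top
    exact ⟨len', rfl⟩
  subst hk
  have hklen : ((k : ℕ) : ℕ∞) < len := hcon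
  have hmap : ∀ i : Fin (k+1), ∃ m : ℕ, m < k ∧ e' m = e i.1 := by
    intro i
    have hi : ((i.1 : ℕ) : ℕ∞) < len := nat_cast_lt_trans (by omega) hklen
    obtain ⟨m, hm, hme⟩ := hE'.2.1 (e i.1) (hE.1 i.1 hi)
    exact ⟨m, by exact_mod_cast hm, hme⟩
  choose f hf1 hf2 using hmap
  have hinj : Function.Injective (fun i : Fin (k+1) => (⟨f i, hf1 i⟩ : Fin k)) := by
    intro i j hij
    simp only [Fin.mk.injEq] at hij
    have : e i.1 = e j.1 := by rw [← hf2 i, ← hf2 j, hij]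
    by_contra hne
    exact enum_ne_of_lt hE (nat_cast_lt_trans (by omega) hklen)
      (nat_cast_lt_trans (by omega) hklen)
      (fun hq => hne (Fin.ext hq)) this
  have := Fintype.card_le_of_injective _ hinj
  simp at this

lemma enum_unique (hE : IsEnum A e len) (hE' : IsEnum A e' len') :
    len = len' ∧ ∀ k : ℕ, (k : ℕ∞) < len → e k = e' k := by
  have hl := le_antisymm (enum_len_le hE hE') (enum_len_le hE' hE)
  exact ⟨hl, fun k hk => enum_unique_ptwise hE hE' k hk (hl ▸ hk)⟩

lemma enum_encard (hE : IsEnum A e len) : A.encard = len := by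
  have hset : A = e '' {k : ℕ | (k : ℕ∞) < len} := by
    ext v
    constructor
    · intro hv
      obtain ⟨k, hk, hek⟩ := hE.2.1 v hv
      exact ⟨k, hk, hek⟩
    · rintro ⟨k, hk, rfl⟩
      exact hE.1 k hk
  have hinj : Set.InjOn e {k : ℕ | (k : ℕ∞) < len} := by
    intro i hi j hj hij
    by_contra hne
    exact enum_ne_of_lt hE hi hj hne hij
  rw [hset, hinj.encard_image]
  cases len with
  | top =>
    have : {k : ℕ | (k : ℕ∞) < ⊤} = Set.univ := by
      ext k; simp [lt_top_iff_ne_top]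
    rw [this]
    exact Set.Infinite.encard_eq Set.infinite_univ
  | coe n =>
    have : {k : ℕ | (k : ℕ∞) < (n : ℕ∞)} = ↑(Finset.range n) := by
      ext k; simp [Nat.cast_lt]
    rw [this, Set.encard_coe_eq_coe_finsetCard, Finset.card_range]

end Unique
section HeightDet

variable {A : Set Vertex} {e : ℕ → Vertex} {len : ℕ∞}

/-- The heights of a simple animal are determined by the x-coordinates. -/
lemma enum_height (hE : IsEnum A e len) (hAn : IsAnimal A) :
    ∀ k : ℕ, (k : ℕ∞) < len → ∀ x : ℕ → ℤ, (∀ j, j ≤ k → x j = (e j).1) →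
      yseq x k = (e k).2 := by
  intro k
  induction k using Nat.strong_induction_on with
  | _ k IH =>
    intro hk x hagree
    rcases Nat.eq_zero_or_pos k with rfl | hpos
    · rw [yseq_zero, enum_zero_height hE hAn]
    · obtain ⟨k', rfl⟩ : ∃ k'', k = k'' + 1 := ⟨k - 1, by omega⟩
      have hadj_lt : ∀ j, j < k' + 1 → padj x j (k'+1) → (e j).2 < (e (k'+1)).2 := by
        intro j hj hadj
        refine enum_gamma hE hAn (nat_cast_lt_trans (by omega) hk) hk hj ?_
        rcases hadj with h | h <;>
          (rw [hagree j (by omega), hagree (k'+1) le_rfl] at h; rw [abs_le]; omega)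
      rcases Nat.eq_zero_or_pos ((e (k'+1)).2) with h0 | hpos2
      · rw [h0]
        rcases yseq_cases x (k'+1) with hy | ⟨j, hj, hadj, heq⟩
        · exact hy
        · have := hadj_lt j hj hadj
          omega
      · obtain ⟨m, hm, hmk, hm1, hm2⟩ := parent_index hE hAn hk hpos2
        have hpadj : padj x m (k'+1) := by
          rcases hm1 with h | h
          · exact Or.inl (by rw [hagree m (by omega), hagree (k'+1) le_rfl]; exact h)
          · exact Or.inr (by rw [hagree m (by omega), hagree (k'+1) le_rfl]; exact h)
        have hym : yseq x m = (e m).2 :=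
          IH m hmk hm x (fun j hj => hagree j (by omega))
        have hle : (e (k'+1)).2 ≤ yseq x (k'+1) := by
          have := yseq_le x hmk hpadj
          omega
        rcases yseq_cases x (k'+1) with hy | ⟨j, hj, hadj, heq⟩
        · omega
        · have hyj : yseq x j = (e j).2 :=
            IH j hj (nat_cast_lt_trans (by omega) hk) x (fun i hi => hagree i (by omega))
          have := hadj_lt j hj hadj
          omega

/-- A sequence agreeing with the x-coordinates reconstructs the enumeration. -/
lemma esq_eq (hE : IsEnum A e len) (hAn : IsAnimal A) {x : ℕ → ℤ}
    (hagree : ∀ j : ℕ, (j : ℕ∞) < len → x j = (e j).1) :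
    ∀ k : ℕ, (k : ℕ∞) < len → esq x k = e k := by
  intro k hk
  refine Prod.ext (hagree k hk) ?_
  exact enum_height hE hAn k hk x
    (fun j hj => hagree j (nat_cast_lt_trans hj hk))

end HeightDet

section Maps

/-- The sequence read off from an enumeration. -/
def seqOf (e : ℕ → Vertex) (len : ℕ∞) : PSeq :=
  ⟨len, fun k => if (k : ℕ∞) < len then (e k).1 else 0, fun _ hk => if_neg hk⟩

variable {A : Set Vertex} {e : ℕ → Vertex} {len : ℕ∞}

lemma seqOf_x_eq {k : ℕ} (hk : (k : ℕ∞) < len) :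
    (seqOf e len).x k = (e k).1 := if_pos hk

lemma seqOf_inf' {k : ℕ} (hk1 : ((k + 1 : ℕ) : ℕ∞) < len) :
    (Finset.range (k+1)).inf' Finset.nonempty_range_add_one (seqOf e len).x =
      (Finset.range (k+1)).inf' Finset.nonempty_range_add_one (fun i => (e i).1) := by
  apply Finset.inf'_congr _ rfl
  intro i hi
  exact seqOf_x_eq (nat_cast_lt_trans (by
    have := Finset.mem_range.mp hi; omega) hk1)

lemma seqOf_good (hE : IsEnum A e len) (hAn : IsAnimal A) :
    GoodSeq (seqOf e len) := by
  have h0 : (0 : ℕ∞) < len := enum_zero_lt hE hAn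
  refine ⟨h0, ?_, ?_, ?_⟩
  · intro k hk1
    have hk1' : ((k + 1 : ℕ) : ℕ∞) < len := hk1
    have hk : (k : ℕ∞) < len := nat_cast_lt_trans (by omega) hk1'
    rw [seqOf_x_eq hk1', seqOf_x_eq hk]
    exact enum_condA hE hAn hk1'
  · intro hlen
    rw [seqOf_x_eq (show ((0:ℕ):ℕ∞) < len by exact_mod_cast h0)]
    exact enum_zero_even hE hAn
  · intro k hk1 hdrop
    have hk1' : ((k + 1 : ℕ) : ℕ∞) < len := hk1
    rw [seqOf_x_eq hk1']
    rw [seqOf_x_eq hk1', seqOf_inf' hk1'] at hdrop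
    exact enum_condB2 hE hAn hk1' hdrop

lemma PSeq_ext {s t : PSeq} (h1 : s.len = t.len) (h2 : s.x = t.x) : s = t := by
  cases s; cases t
  simp only [PSeq.mk.injEq]
  exact ⟨h1, h2⟩

end Maps
section Equivalence

/-- The forward map of Ψ. -/
noncomputable def Fmap (Ap : {A : Set Vertex // IsSimple A}) : {s : PSeq // GoodSeq s} :=
  ⟨seqOf Ap.2.2.choose Ap.2.2.choose_spec.choose,
   seqOf_good Ap.2.2.choose_spec.choose_spec Ap.2.1⟩

/-- The inverse map of Ψ. -/
def Gmap (sp : {s : PSeq // GoodSeq s}) : {A : Set Vertex // IsSimple A} :=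
  ⟨ASet sp.1.x sp.1.len,
   b_animal sp.2.2.1 sp.2.2.2 sp.2.1, esq sp.1.x, sp.1.len, b_enum sp.2.2.1⟩

lemma Fmap_spec (Ap : {A : Set Vertex // IsSimple A}) {e : ℕ → Vertex} {len : ℕ∞}
    (hE : IsEnum Ap.1 e len) :
    (Fmap Ap).1.len = len ∧
      ∀ k : ℕ, (k : ℕ∞) < len → (Fmap Ap).1.x k = (e k).1 := by
  obtain ⟨hl, hp⟩ := enum_unique Ap.2.2.choose_spec.choose_spec hE
  refine ⟨hl, fun k hk => ?_⟩
  have hk0 : (k : ℕ∞) < Ap.2.2.choose_spec.choose := by rw [hl]; exact hk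
  show (seqOf _ _).x k = (e k).1
  rw [seqOf_x_eq hk0, hp k hk0]

lemma Fmap_left_inv (Ap : {A : Set Vertex // IsSimple A}) : Gmap (Fmap Ap) = Ap := by
  apply Subtype.ext
  have hE₀ := Ap.2.2.choose_spec.choose_spec
  have hagree : ∀ j : ℕ, (j : ℕ∞) < Ap.2.2.choose_spec.choose →
      (Fmap Ap).1.x j = (Ap.2.2.choose j).1 := fun j hj => seqOf_x_eq hj
  have hesq := esq_eq hE₀ Ap.2.1 hagree
  show ASet (Fmap Ap).1.x (Fmap Ap).1.len = Ap.1
  ext v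
  constructor
  · rintro ⟨k, hk, rfl⟩
    rw [hesq k hk]
    exact hE₀.1 k hk
  · intro hv
    obtain ⟨k, hk, hek⟩ := hE₀.2.1 v hv
    exact ⟨k, hk, (hesq k hk).trans hek⟩

lemma Fmap_right_inv (sp : {s : PSeq // GoodSeq s}) : Fmap (Gmap sp) = sp := by
  apply Subtype.ext
  have hE0 : IsEnum (ASet sp.1.x sp.1.len) (esq sp.1.x) sp.1.len := b_enum sp.2.2.1
  obtain ⟨hl, hp⟩ := Fmap_spec (Gmap sp) hE0
  apply PSeq_ext hl
  funext k
  by_cases hk : (k : ℕ∞) < sp.1.len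
  · rw [hp k hk]; rfl
  · rw [(Fmap (Gmap sp)).1.trunc k (by rw [hl]; exact hk), sp.1.trunc k hk]

/-- Abstract form of the pyramid ↔ (c) equivalence. -/
lemma pyr_iff_condC {A : Set Vertex} {e : ℕ → Vertex} {len : ℕ∞}
    (hE : IsEnum A e len) (hAn : IsAnimal A) (s : PSeq)
    (hslen : s.len = len)
    (hsx : ∀ k : ℕ, (k : ℕ∞) < len → s.x k = (e k).1) :
    IsPyramid A ↔ CondC s := by
  have h0 : (0 : ℕ∞) < len := enum_zero_lt hE hAn
  have h0' : ((0 : ℕ) : ℕ∞) < len := by exact_mod_cast h0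
  have hinf : ∀ k : ℕ, ((k + 1 : ℕ) : ℕ∞) < len →
      (Finset.range (k+1)).inf' Finset.nonempty_range_add_one s.x =
        (Finset.range (k+1)).inf' Finset.nonempty_range_add_one (fun i => (e i).1) := by
    intro k hk1
    refine Finset.inf'_congr _ rfl (fun i hi => hsx i ?_)
    exact nat_cast_lt_trans (by have := Finset.mem_range.mp hi; omega) hk1
  constructor
  · intro hpyr
    constructor
    · rw [hsx 0 h0', pyr_e0 hE hpyr]
    · intro k hk1
      rw [hslen] at hk1
      rw [hinf k hk1, hsx (k+1) hk1]
      exact pyr_condC2 hE hpyr hk1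
  · intro ⟨hc0, hc2⟩
    apply pyr_of_condC hE hAn
    · rw [hsx 0 h0'] at hc0; exact hc0
    · intro k hk1
      have := hc2 k (by rw [hslen]; exact hk1)
      rwa [hinf k hk1, hsx (k+1) hk1] at this

/-- Abstract form of the non-negative pyramid ↔ (d) equivalence. -/
lemma nonneg_iff_condD {A : Set Vertex} {e : ℕ → Vertex} {len : ℕ∞}
    (hE : IsEnum A e len) (hAn : IsAnimal A) (s : PSeq)
    (hslen : s.len = len)
    (hsx : ∀ k : ℕ, (k : ℕ∞) < len → s.x k = (e k).1) :
    IsNonNegPyramid A ↔ CondD s := by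
  have h0 : (0 : ℕ∞) < len := enum_zero_lt hE hAn
  have h0' : ((0 : ℕ) : ℕ∞) < len := by exact_mod_cast h0
  constructor
  · intro ⟨hpyr, hnn⟩
    constructor
    · rw [hsx 0 h0', pyr_e0 hE hpyr]
    · intro k hk
      rw [hslen] at hk
      rw [hsx k hk]
      exact hnn _ (hE.1 k hk)
  · intro ⟨hd0, hdpos⟩
    have hx0 : (e 0).1 = 0 := by rw [hsx 0 h0'] at hd0; exact hd0
    have hpos : ∀ k : ℕ, (k : ℕ∞) < len → 0 ≤ (e k).1 := by
      intro k hk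
      have := hdpos k (by rw [hslen]; exact hk)
      rwa [hsx k hk] at this
    constructor
    · apply pyr_of_condC hE hAn hx0
      intro k hk1
      have hinfle : (Finset.range (k+1)).inf' Finset.nonempty_range_add_one
          (fun i => (e i).1) ≤ 0 := by
        have := Finset.inf'_le (fun i => (e i).1)
          (Finset.mem_range.mpr (show 0 < k + 1 by omega))
        rw [hx0] at this
        exact this
      have := hpos (k+1) hk1
      omega
    · intro v hv
      obtain ⟨k, hk, hek⟩ := hE.2.1 v hv
      rw [← hek]
      exact hpos k hk

lemma Fmap_encard (Ap : {A : Set Vertex // IsSimple A}) :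
    (Fmap Ap).1.len = Ap.1.encard :=
  (enum_encard Ap.2.2.choose_spec.choose_spec).symm

end Equivalence
/-- The path-encoding bijection Ψ (characterized by: the sequence
associated with a simple animal lists the x-coordinates of its vertices taken
increasingly for ≼) restricts to: (1) a bijection between simple pyramids rooted
at (0,0) and sequences satisfying (a) and (c); (2) a bijection between simple
non-negative pyramids rooted at (0,0) and sequences satisfying (a) and (d).
Moreover an animal with n ∈ ℕ ∪ {∞} vertices corresponds to a sequence of length
n, so these bijections further restrict to bijections between animals of any
prescribed size and sequences of that length. -/
theorem path_encoding_pyramids :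
    ∃ Φ : {A : Set Vertex // IsSimple A} ≃ {s : PSeq // GoodSeq s},
      (∀ (A : {A : Set Vertex // IsSimple A}) (e : ℕ → Vertex) (len : ℕ∞),
          IsEnum A.1 e len →
          (Φ A).1.len = len ∧ ∀ k : ℕ, (k : ℕ∞) < len → (Φ A).1.x k = (e k).1) ∧
      (∀ A : {A : Set Vertex // IsSimple A}, IsPyramid A.1 ↔ CondC (Φ A).1) ∧
      (∀ A : {A : Set Vertex // IsSimple A}, IsNonNegPyramid A.1 ↔ CondD (Φ A).1) ∧
      (∀ A : {A : Set Vertex // IsSimple A}, (Φ A).1.len = A.1.encard) := by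
  refine ⟨⟨Fmap, Gmap, Fmap_left_inv, Fmap_right_inv⟩, ?_, ?_, ?_, ?_⟩
  · intro A e len hE
    exact Fmap_spec A hE
  · intro A
    exact pyr_iff_condC A.2.2.choose_spec.choose_spec A.2.1 _ rfl
      (fun k hk => seqOf_x_eq hk)
  · intro A
    exact nonneg_iff_condD A.2.2.choose_spec.choose_spec A.2.1 _ rfl
      (fun k hk => seqOf_x_eq hk)
  · intro A
    exact Fmap_encard A
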